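/- arXiv:2005.02248 — 2 statements merged into one kernel-verified Lean document; each statement's English description precedes it below -/
import Mathlib

section
/- Under the stated operator setting, let 1 ≤ k ≤ p (with the convention μ_{k+1} = μ_{r+1} if k = r). Then for every φ ∈ Φ with ⟨φ, q_i⟩ = 0 for all 1 ≤ i ≤ k − 1, one has ⟨φ, T φ⟩ ≤ (μ_k · ⟨η_k, q_k⟩² + μ_{k+1}) · ‖φ‖². -/
/-!
Write `tᵢ = P_Φ ηᵢ - ∑_{l<i} ⟨q_l, ηᵢ⟩ q_l`, so that `tᵢ = ‖tᵢ‖ qᵢ`. The vectors `qᵢ` lie in `Φ`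
and are pairwise orthogonal of norm `0` or `1`, and for `φ ∈ Φ` self-adjointness of `P_Φ` gives
`⟨ηᵢ, φ⟩ = ‖tᵢ‖ ⟨qᵢ, φ⟩ + ∑_{l<i} ⟨q_l, ηᵢ⟩ ⟨q_l, φ⟩`. Hence if `φ ⊥ q₁, …, q_{k-1}` then
`⟨ηᵢ, φ⟩ = 0` for `i < k` and `⟨η_k, φ⟩ = ⟨η_k, q_k⟩ ⟨q_k, φ⟩`.

On the other hand, splitting `φ = ∑ᵢ ⟨ηᵢ, φ⟩ ηᵢ + w` with `w ⊥ η₁, …, η_r` and using that `T`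
preserves both summands, `⟨φ, Tφ⟩ = ∑ᵢ μᵢ ⟨ηᵢ, φ⟩² + ⟨w, Tw⟩`. All coefficients with `i ≠ k` are
either zero or weighted by at most `μ_{k+1}`, which gives
`⟨φ, Tφ⟩ ≤ μ_k ⟨η_k, φ⟩² + μ_{k+1} ‖φ‖² ≤ (μ_k ⟨η_k, q_k⟩² + μ_{k+1}) ‖φ‖²`.
-/

open scoped RealInnerProductSpace ENNReal
open Submodule Filter

noncomputable section

variable {H : Type*} [NormedAddCommGroup H] [InnerProductSpace ℝ H] [CompleteSpace H]

/-- Orthogonal projection onto `U`, as an operator `H → H` (defined to be `0` in the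
degenerate case where `U` admits no orthogonal projection). -/
noncomputable def proj (U : Submodule ℝ H) : H →L[ℝ] H := by
  classical
  exact if h : HasOrthogonalProjection U then
    (haveI := h; U.subtypeL ∘L orthogonalProjection U)
  else 0

/-- Squared Hilbert–Schmidt norm of an operator, computed in a fixed Hilbert basis of `H`. -/
noncomputable def hsNormSq (A : H →L[ℝ] H) : ℝ≥0∞ :=
  ∑' i : (exists_hilbertBasis ℝ H).choose,
    (‖A ((exists_hilbertBasis ℝ H).choose_spec.choose i)‖₊ : ℝ≥0∞) ^ 2

/-- Hilbert–Schmidt (Frobenius) norm of an operator. -/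
noncomputable def hsNorm (A : H →L[ℝ] H) : ℝ := Real.sqrt (hsNormSq A).toReal

/-- Projection distance `d_F(U, W) = ‖P_{Wᗮ} P_U‖_F`. -/
noncomputable def dF (U W : Submodule ℝ H) : ℝ := hsNorm ((proj Wᗮ) ∘L (proj U))

/-- Gap distance `d₂(U, W) = ‖P_{Wᗮ} P_U‖₂`. -/
noncomputable def d2 (U W : Submodule ℝ H) : ℝ := ‖(proj Wᗮ) ∘L (proj U)‖

section

variable {E : Type*} [NormedAddCommGroup E] [InnerProductSpace ℝ E]

theorem proj_eq_starProjection (U : Submodule ℝ E) [U.HasOrthogonalProjection] :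
    proj U = U.starProjection := by
  rw [proj, dif_pos ‹_›]
  rfl

theorem proj_apply_mem (U : Submodule ℝ E) [U.HasOrthogonalProjection] (x : E) :
    proj U x ∈ U := by
  rw [proj_eq_starProjection]
  exact U.starProjection_apply_mem x

theorem inner_proj_right_of_mem (U : Submodule ℝ E) [U.HasOrthogonalProjection] (x : E) {y : E}
    (hy : y ∈ U) : ⟪y, proj U x⟫ = ⟪y, x⟫ := by
  rw [proj_eq_starProjection, ← U.inner_starProjection_left_eq_right,
    U.starProjection_eq_self_iff.2 hy]

theorem eq_zero_or_norm_eq_one_of_eq_inv_norm_smul {q t : E} (h : q = ‖t‖⁻¹ • t) :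
    q = 0 ∨ ‖q‖ = 1 := by
  rcases eq_or_ne t 0 with rfl | ht
  · simp [h]
  · exact Or.inr (h ▸ norm_smul_inv_norm ht)

theorem eq_norm_smul_of_eq_inv_norm_smul {q t : E} (h : q = ‖t‖⁻¹ • t) : t = ‖t‖ • q := by
  rcases eq_or_ne t 0 with rfl | ht
  · simp
  · rw [h, smul_inv_smul₀ (norm_ne_zero_iff.2 ht)]

theorem inner_sum_smul_eq_of_inner_eq_zero {ι : Type*} {v : ι → E} {s : Finset ι} {l : ι}
    (hl : l ∈ s) (c : ι → ℝ) (h : ∀ m ∈ s, m ≠ l → ⟪v l, v m⟫ = 0) :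
    ⟪v l, ∑ m ∈ s, c m • v m⟫ = c l * ⟪v l, v l⟫ := by
  rw [inner_sum, Finset.sum_eq_single_of_mem l hl fun m hm hml => by
    rw [real_inner_smul_right, h m hm hml, mul_zero]]
  exact real_inner_smul_right _ _ _

theorem mem_orthogonal_span_range {ι : Type*} {v : ι → E} {w : E} (h : ∀ i, ⟪w, v i⟫ = 0) :
    w ∈ (span ℝ (Set.range v))ᗮ := by
  have hortho : span ℝ {w} ⟂ span ℝ (Set.range v) := by
    rw [isOrtho_span]
    rintro _ rfl _ ⟨i, rfl⟩
    exact h i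
  exact isOrtho_iff_le.1 hortho (mem_span_singleton_self w)

def gramSchmidtResidual (Φ : Submodule ℝ E) (x q : ℕ → E) (i : ℕ) : E :=
  proj Φ (x i) - ∑ l ∈ Finset.Ico 1 i, ⟪q l, x i⟫ • q l

/-- Gram–Schmidt applied to `proj Φ (x 1), …, proj Φ (x N)`. Without linear independence a
residual may vanish, and then `q i = 0` since `‖0‖⁻¹ = 0`: the `q i` are pairwise orthogonal,
each of norm `0` or `1`. -/
def IsGramSchmidt (Φ : Submodule ℝ E) (x q : ℕ → E) (N : ℕ) : Prop :=
  ∀ i ∈ Set.Icc 1 N, q i = ‖gramSchmidtResidual Φ x q i‖⁻¹ • gramSchmidtResidual Φ x q i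

section GramSchmidt

variable {Φ : Submodule ℝ E} [Φ.HasOrthogonalProjection] {x q : ℕ → E} {N : ℕ}

theorem gramSchmidt_mem_and_orthogonal
    (hq : IsGramSchmidt Φ x q N) :
    ∀ i ∈ Set.Icc 1 N, q i ∈ Φ ∧ ∀ l ∈ Finset.Ico 1 i, ⟪q l, q i⟫ = 0 := by
  intro i
  induction i using Nat.strong_induction_on with
  | _ i ih =>
  intro hi
  have hprev : ∀ l ∈ Finset.Ico 1 i, l < i ∧ l ∈ Set.Icc 1 N := fun l hl => by
    simp only [Finset.mem_Ico, Set.mem_Icc] at hl hi ⊢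
    omega
  have hres_mem : gramSchmidtResidual Φ x q i ∈ Φ :=
    sub_mem (proj_apply_mem Φ _) <| sum_mem fun l hl =>
      smul_mem _ _ (ih l (hprev l hl).1 (hprev l hl).2).1
  refine ⟨hq i hi ▸ smul_mem _ _ hres_mem, fun l hl => ?_⟩
  obtain ⟨hql_mem, hql_orth⟩ := ih l (hprev l hl).1 (hprev l hl).2
  have hpair : ∀ m ∈ Finset.Ico 1 i, m ≠ l → ⟪q l, q m⟫ = 0 := by
    intro m hm hml
    rcases hml.lt_or_gt with hlt | hgt
    · rw [real_inner_comm]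
      exact hql_orth m (Finset.mem_Ico.2 ⟨(Finset.mem_Ico.1 hm).1, hlt⟩)
    · exact (ih m (hprev m hm).1 (hprev m hm).2).2 l
        (Finset.mem_Ico.2 ⟨(Finset.mem_Ico.1 hl).1, hgt⟩)
  have hres : ⟪q l, gramSchmidtResidual Φ x q i⟫ = 0 := by
    rw [gramSchmidtResidual, inner_sub_right, inner_proj_right_of_mem Φ _ hql_mem,
      inner_sum_smul_eq_of_inner_eq_zero hl _ hpair]
    rcases eq_zero_or_norm_eq_one_of_eq_inv_norm_smul (hq l (hprev l hl).2) with h0 | h1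
    · simp [h0]
    · rw [real_inner_self_eq_norm_sq, h1]
      ring
  rw [hq i hi, real_inner_smul_right, hres, mul_zero]

theorem inner_eq_gramSchmidt_expansion
    (hq : IsGramSchmidt Φ x q N)
    {i : ℕ} (hi : i ∈ Set.Icc 1 N) {φ : E} (hφ : φ ∈ Φ) :
    ⟪φ, x i⟫ = ‖gramSchmidtResidual Φ x q i‖ * ⟪φ, q i⟫
      + ∑ l ∈ Finset.Ico 1 i, ⟪q l, x i⟫ * ⟪φ, q l⟫ := by
  have hx : proj Φ (x i) = ‖gramSchmidtResidual Φ x q i‖ • q i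
      + ∑ l ∈ Finset.Ico 1 i, ⟪q l, x i⟫ • q l := by
    rw [← eq_norm_smul_of_eq_inv_norm_smul (hq i hi), gramSchmidtResidual, sub_add_cancel]
  rw [← inner_proj_right_of_mem Φ _ hφ, hx, inner_add_right, real_inner_smul_right, inner_sum]
  simp_rw [real_inner_smul_right]

theorem inner_eq_zero_of_orthogonal_gramSchmidt
    (hq : IsGramSchmidt Φ x q N)
    {k : ℕ} (hkN : k ≤ N) {φ : E} (hφ : φ ∈ Φ) (hφq : ∀ l ∈ Finset.Ico 1 k, ⟪φ, q l⟫ = 0)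
    {i : ℕ} (hi : i ∈ Finset.Ico 1 k) : ⟪x i, φ⟫ = 0 := by
  obtain ⟨hi1, hik⟩ := Finset.mem_Ico.1 hi
  rw [real_inner_comm, inner_eq_gramSchmidt_expansion hq ⟨hi1, by omega⟩ hφ, hφq i hi, mul_zero,
    zero_add]
  refine Finset.sum_eq_zero fun l hl => ?_
  rw [hφq l (Finset.mem_Ico.2 ⟨(Finset.mem_Ico.1 hl).1, (Finset.mem_Ico.1 hl).2.trans hik⟩),
    mul_zero]

theorem sq_inner_le_of_orthogonal_gramSchmidt
    (hq : IsGramSchmidt Φ x q N)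
    {k : ℕ} (hk : k ∈ Set.Icc 1 N) {φ : E} (hφ : φ ∈ Φ)
    (hφq : ∀ l ∈ Finset.Ico 1 k, ⟪φ, q l⟫ = 0) :
    ⟪x k, φ⟫ ^ 2 ≤ ⟪x k, q k⟫ ^ 2 * ‖φ‖ ^ 2 := by
  set t := gramSchmidtResidual Φ x q k
  have hsum_eq_zero : ∀ {y : E}, (∀ l ∈ Finset.Ico 1 k, ⟪y, q l⟫ = 0) →
      ∑ l ∈ Finset.Ico 1 k, ⟪q l, x k⟫ * ⟪y, q l⟫ = 0 := fun hy =>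
    Finset.sum_eq_zero fun l hl => by rw [hy l hl, mul_zero]
  obtain ⟨hqk_mem, hqk_orth⟩ := gramSchmidt_mem_and_orthogonal hq k hk
  have hφx : ⟪x k, φ⟫ = ‖t‖ * ⟪φ, q k⟫ := by
    rw [real_inner_comm, inner_eq_gramSchmidt_expansion hq hk hφ, hsum_eq_zero hφq, add_zero]
  have hqx : ⟪x k, q k⟫ = ‖t‖ * ⟪q k, q k⟫ := by
    rw [real_inner_comm, inner_eq_gramSchmidt_expansion hq hk hqk_mem,
      hsum_eq_zero fun l hl => by rw [real_inner_comm, hqk_orth l hl], add_zero]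
  rcases eq_zero_or_norm_eq_one_of_eq_inv_norm_smul (hq k hk) with h0 | h1
  · rw [hφx, h0, inner_zero_right, mul_zero, zero_pow two_ne_zero]
    positivity
  · have hcs : |⟪φ, q k⟫| ≤ ‖φ‖ := by simpa [h1] using abs_real_inner_le_norm φ (q k)
    calc ⟪x k, φ⟫ ^ 2 = ‖t‖ ^ 2 * |⟪φ, q k⟫| ^ 2 := by rw [hφx, mul_pow, sq_abs]
      _ ≤ ‖t‖ ^ 2 * ‖φ‖ ^ 2 := by gcongr
      _ = ⟪x k, q k⟫ ^ 2 * ‖φ‖ ^ 2 := by rw [hqx, real_inner_self_eq_norm_sq, h1]; ring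

end GramSchmidt

section Spectral

variable {ι : Type*} [Fintype ι] {e : ι → E} {T : E →L[ℝ] E} {μ : ι → ℝ}

theorem sub_sum_inner_smul_mem_orthogonal (he : Orthonormal ℝ e) (φ : E) :
    φ - ∑ i, ⟪e i, φ⟫ • e i ∈ (span ℝ (Set.range e))ᗮ :=
  mem_orthogonal_span_range fun i => by
    rw [real_inner_comm, inner_sub_right, he.inner_right_fintype, sub_self]

theorem sum_smul_mem_span_range (c : ι → ℝ) : ∑ i, c i • e i ∈ span ℝ (Set.range e) :=
  sum_mem fun i _ => smul_mem _ _ (subset_span ⟨i, rfl⟩)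

theorem norm_sq_eq_sum_add (he : Orthonormal ℝ e) (φ : E) :
    ‖φ‖ ^ 2 = ∑ i, ⟪e i, φ⟫ ^ 2 + ‖φ - ∑ i, ⟪e i, φ⟫ • e i‖ ^ 2 := by
  set s := ∑ i, ⟪e i, φ⟫ • e i
  have hperp : ⟪s, φ - s⟫ = 0 := inner_right_of_mem_orthogonal (sum_smul_mem_span_range _)
    (sub_sum_inner_smul_mem_orthogonal he φ)
  have hs : ‖s‖ ^ 2 = ∑ i, ⟪e i, φ⟫ ^ 2 := by
    rw [← real_inner_self_eq_norm_sq, he.inner_sum]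
    simp [sq]
  rw [← hs, sq, sq, sq, ← norm_add_sq_eq_norm_sq_add_norm_sq_real hperp, add_sub_cancel]

theorem inner_map_self_eq_sum_add (he : Orthonormal ℝ e) (hTe : ∀ i, T (e i) = μ i • e i)
    (hTinv : ∀ w ∈ (span ℝ (Set.range e))ᗮ, T w ∈ (span ℝ (Set.range e))ᗮ) (φ : E) :
    ⟪φ, T φ⟫ = ∑ i, μ i * ⟪e i, φ⟫ ^ 2
      + ⟪φ - ∑ i, ⟪e i, φ⟫ • e i, T (φ - ∑ i, ⟪e i, φ⟫ • e i)⟫ := by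
  set s := ∑ i, ⟪e i, φ⟫ • e i
  have hw := sub_sum_inner_smul_mem_orthogonal he φ
  have hTs : T s = ∑ i, (μ i * ⟪e i, φ⟫) • e i := by
    simp only [s, map_sum, map_smul, hTe, smul_smul, mul_comm]
  have hsTs : ⟪s, T s⟫ = ∑ i, μ i * ⟪e i, φ⟫ ^ 2 := by
    rw [hTs, he.inner_sum]
    exact Finset.sum_congr rfl fun i _ => by simp only [conj_trivial]; ring
  have hsTw : ⟪s, T (φ - s)⟫ = 0 :=
    inner_right_of_mem_orthogonal (sum_smul_mem_span_range _) (hTinv _ hw)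
  have hwTs : ⟪φ - s, T s⟫ = 0 := inner_left_of_mem_orthogonal (hTs ▸ sum_smul_mem_span_range _) hw
  have hsplit : φ = s + (φ - s) := (add_sub_cancel s φ).symm
  conv_lhs => rw [hsplit]
  rw [map_add, inner_add_left, inner_add_right, inner_add_right, hsTs, hsTw, hwTs]
  ring

theorem inner_map_self_le (he : Orthonormal ℝ e) (hTe : ∀ i, T (e i) = μ i • e i)
    (hTinv : ∀ w ∈ (span ℝ (Set.range e))ᗮ, T w ∈ (span ℝ (Set.range e))ᗮ) {m : ℝ}
    (hres : ∀ w ∈ (span ℝ (Set.range e))ᗮ, ⟪w, T w⟫ ≤ m * ‖w‖ ^ 2) (i₀ : ι) {φ : E}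
    (hφ : ∀ i ≠ i₀, μ i * ⟪e i, φ⟫ ^ 2 ≤ m * ⟪e i, φ⟫ ^ 2) :
    ⟪φ, T φ⟫ ≤ μ i₀ * ⟪e i₀, φ⟫ ^ 2 + m * (‖φ‖ ^ 2 - ⟪e i₀, φ⟫ ^ 2) := by
  classical
  have hsum : ∑ i ∈ Finset.univ.erase i₀, μ i * ⟪e i, φ⟫ ^ 2
      ≤ m * ∑ i ∈ Finset.univ.erase i₀, ⟪e i, φ⟫ ^ 2 := by
    rw [Finset.mul_sum]
    exact Finset.sum_le_sum fun i hi => hφ i (Finset.ne_of_mem_erase hi)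
  have hw := hres _ (sub_sum_inner_smul_mem_orthogonal he φ)
  have hsplit (f : ι → ℝ) := (Finset.add_sum_erase Finset.univ f (Finset.mem_univ i₀)).symm
  have hquad := inner_map_self_eq_sum_add he hTe hTinv φ
  have hnorm := norm_sq_eq_sum_add he φ
  rw [hsplit] at hquad hnorm
  rw [hquad, hnorm]
  linarith

end Spectral

theorem inner_map_self_le_of_orthogonal_leading_eigenvectors {T : E →L[ℝ] E} {r : ℕ} {η : ℕ → E}
    {μ : ℕ → ℝ}
    (hη : ∀ i ∈ Set.Icc 1 r, ∀ j ∈ Set.Icc 1 r, ⟪η i, η j⟫ = if i = j then (1 : ℝ) else 0)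
    (hTeig : ∀ i ∈ Set.Icc 1 r, T (η i) = μ i • η i)
    (hμmono : ∀ i ∈ Set.Icc 1 (r + 1), ∀ j ∈ Set.Icc 1 (r + 1), i ≤ j → μ j ≤ μ i)
    (hTinv : ∀ w ∈ (span ℝ (η '' Set.Icc 1 r))ᗮ, T w ∈ (span ℝ (η '' Set.Icc 1 r))ᗮ)
    (hTres : ∀ w ∈ (span ℝ (η '' Set.Icc 1 r))ᗮ, ⟪w, T w⟫ ≤ μ (r + 1) * ‖w‖ ^ 2)
    {k : ℕ} (hk : k ∈ Set.Icc 1 r) {φ : E} (hφ : ∀ i ∈ Finset.Ico 1 k, ⟪η i, φ⟫ = 0) :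
    ⟪φ, T φ⟫ ≤ μ k * ⟪η k, φ⟫ ^ 2 + μ (k + 1) * (‖φ‖ ^ 2 - ⟪η k, φ⟫ ^ 2) := by
  obtain ⟨hk1, hkr⟩ := hk
  have he : Orthonormal ℝ (fun i : Set.Icc 1 r => η i) :=
    orthonormal_iff_ite.2 fun i j => by simpa [Subtype.ext_iff] using hη i i.2 j j.2
  rw [Set.image_eq_range] at hTinv hTres
  have hμ_le : ∀ i ∈ Set.Icc (k + 1) (r + 1), μ i ≤ μ (k + 1) := fun i ⟨hki, hir⟩ =>
    hμmono _ ⟨by omega, by omega⟩ i ⟨by omega, hir⟩ hki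
  refine inner_map_self_le he (fun i => hTeig i i.2) hTinv
    (fun w hw => (hTres w hw).trans ?_) ⟨k, hk1, hkr⟩ fun ⟨i, hi1, hir⟩ hik => ?_
  · exact mul_le_mul_of_nonneg_right (hμ_le _ ⟨by omega, le_rfl⟩) (sq_nonneg _)
  · rcases lt_or_gt_of_ne (Subtype.coe_ne_coe.2 hik) with hlt | hgt
    · simp [hφ i (Finset.mem_Ico.2 ⟨hi1, hlt⟩)]
    · exact mul_le_mul_of_nonneg_right (hμ_le i ⟨hgt, by omega⟩) (sq_nonneg _)

end

theorem stmt11_general {H : Type*} [NormedAddCommGroup H] [InnerProductSpace ℝ H]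
    (T : H →L[ℝ] H)
    (r : ℕ) (η : ℕ → H) (μ : ℕ → ℝ)
    (hη : ∀ i ∈ Set.Icc 1 r, ∀ j ∈ Set.Icc 1 r, ⟪η i, η j⟫ = if i = j then (1 : ℝ) else 0)
    (hTeig : ∀ i ∈ Set.Icc 1 r, T (η i) = μ i • η i)
    (hμmono : ∀ i ∈ Set.Icc 1 (r + 1), ∀ j ∈ Set.Icc 1 (r + 1), i ≤ j → μ j ≤ μ i)
    (hμr : 0 < μ r) (hμr1 : 0 ≤ μ (r + 1))
    (hTinv : ∀ w ∈ (span ℝ (η '' Set.Icc 1 r))ᗮ, T w ∈ (span ℝ (η '' Set.Icc 1 r))ᗮ)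
    (hTres : ∀ w ∈ (span ℝ (η '' Set.Icc 1 r))ᗮ, ⟪w, T w⟫ ≤ μ (r + 1) * ‖w‖ ^ 2)
    (n : ℕ) (Φ : Submodule ℝ H) (hΦfd : FiniteDimensional ℝ Φ)
    (q : ℕ → H)
    (hq : ∀ i ∈ Set.Icc 1 (min n r),
      q i = ‖proj Φ (η i) - ∑ l ∈ Finset.Ico 1 i, ⟪q l, η i⟫ • q l‖⁻¹ •
            (proj Φ (η i) - ∑ l ∈ Finset.Ico 1 i, ⟪q l, η i⟫ • q l))
    (k : ℕ) (hk1 : 1 ≤ k) (hkp : k ≤ min n r) :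
    ∀ φ ∈ Φ, (∀ i ∈ Set.Icc 1 (k - 1), ⟪φ, q i⟫ = 0) →
      ⟪φ, T φ⟫ ≤ (μ k * ⟪η k, q k⟫ ^ 2 + μ (k + 1)) * ‖φ‖ ^ 2 := by
  intro φ hφ hφq
  have hkr : k ≤ r := hkp.trans (min_le_right n r)
  have hφq' : ∀ l ∈ Finset.Ico 1 k, ⟪φ, q l⟫ = 0 := fun l hl =>
    hφq l (by simp only [Finset.mem_Ico, Set.mem_Icc] at hl ⊢; omega)
  have hspec := inner_map_self_le_of_orthogonal_leading_eigenvectors hη hTeig hμmono hTinv hTres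
    ⟨hk1, hkr⟩ fun i hi => inner_eq_zero_of_orthogonal_gramSchmidt hq hkp hφ hφq' hi
  have hcoef : ⟪η k, φ⟫ ^ 2 ≤ ⟪η k, q k⟫ ^ 2 * ‖φ‖ ^ 2 :=
    sq_inner_le_of_orthogonal_gramSchmidt hq ⟨hk1, hkp⟩ hφ hφq'
  have hμk : 0 ≤ μ k := hμr.le.trans (hμmono k ⟨hk1, by omega⟩ r ⟨by omega, by omega⟩ hkr)
  have hμk1 : 0 ≤ μ (k + 1) :=
    hμr1.trans (hμmono (k + 1) ⟨by omega, by omega⟩ (r + 1) ⟨by omega, le_rfl⟩ (by omega))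
  nlinarith [mul_le_mul_of_nonneg_left hcoef hμk, mul_nonneg hμk1 (sq_nonneg ⟪η k, φ⟫)]

/-- For `φ ∈ Φ` orthogonal to `q₁, …, q_{k−1}`,
`⟨φ, T φ⟩ ≤ (μ_k ⟨η_k, q_k⟩² + μ_{k+1}) ‖φ‖²`. -/
theorem stmt11 {H : Type*} [NormedAddCommGroup H] [InnerProductSpace ℝ H] [CompleteSpace H]
    (T : H →L[ℝ] H)
    (hTsa : ∀ x y : H, ⟪T x, y⟫ = ⟪x, T y⟫)
    (hTpos : ∀ u : H, 0 ≤ ⟪u, T u⟫)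
    (r : ℕ) (hr : 1 ≤ r) (η : ℕ → H) (μ : ℕ → ℝ)
    (hη : ∀ i ∈ Set.Icc 1 r, ∀ j ∈ Set.Icc 1 r, ⟪η i, η j⟫ = if i = j then (1 : ℝ) else 0)
    (hTeig : ∀ i ∈ Set.Icc 1 r, T (η i) = μ i • η i)
    (hμmono : ∀ i ∈ Set.Icc 1 (r + 1), ∀ j ∈ Set.Icc 1 (r + 1), i ≤ j → μ j ≤ μ i)
    (hμr : 0 < μ r) (hμr1 : 0 ≤ μ (r + 1))
    (hTinv : ∀ w ∈ (span ℝ (η '' Set.Icc 1 r))ᗮ, T w ∈ (span ℝ (η '' Set.Icc 1 r))ᗮ)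
    (hTres : ∀ w ∈ (span ℝ (η '' Set.Icc 1 r))ᗮ, ⟪w, T w⟫ ≤ μ (r + 1) * ‖w‖ ^ 2)
    (n : ℕ) (Φ : Submodule ℝ H) (hΦfd : FiniteDimensional ℝ Φ) (hΦn : Module.finrank ℝ Φ = n)
    (hlin : LinearIndependent ℝ (fun i : Set.Icc 1 (min n r) => proj Φ (η i.1)))
    (q : ℕ → H)
    (hq : ∀ i ∈ Set.Icc 1 (min n r),
      q i = ‖proj Φ (η i) - ∑ l ∈ Finset.Ico 1 i, ⟪q l, η i⟫ • q l‖⁻¹ •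
            (proj Φ (η i) - ∑ l ∈ Finset.Ico 1 i, ⟪q l, η i⟫ • q l))
    (k : ℕ) (hk1 : 1 ≤ k) (hkp : k ≤ min n r) :
    ∀ φ ∈ Φ, (∀ i ∈ Set.Icc 1 (k - 1), ⟪φ, q i⟫ = 0) →
      ⟪φ, T φ⟫ ≤ (μ k * ⟪η k, q k⟫ ^ 2 + μ (k + 1)) * ‖φ‖ ^ 2 :=
  stmt11_general T r η μ hη hTeig hμmono hμr hμr1 hTinv hTres n Φ hΦfd q hq k hk1 hkp
end
end

section
/- Let A and B be bounded self-adjoint operators on a real Hilbert space H, and let U and W be closed subspaces of H such that the operator P_W P_U is Hilbert–Schmidt. Suppose the spectrum of the compression P_U A|_U (as an operator on U) is contained in the interval [a, b], and the spectrum of the compression P_W B|_W (as an operator on W) is contained in (−∞, a − δ] ∪ [b + δ, ∞) for some δ > 0. Then δ · ‖P_W P_U‖_F ≤ ‖P_W P_U A P_U − P_W B P_W P_U‖_F. -/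
open scoped RealInnerProductSpace ENNReal
open Submodule Filter

noncomputable section

variable {H : Type*} [NormedAddCommGroup H] [InnerProductSpace ℝ H] [CompleteSpace H]

/-- The compression `P_U A|_U` of an operator `A` to a subspace `U`. -/
noncomputable def compressOp {H : Type*} [NormedAddCommGroup H] [InnerProductSpace ℝ H]
    [CompleteSpace H] (U : Submodule ℝ H) [HasOrthogonalProjection U] (A : H →L[ℝ] H) :
    U →L[ℝ] U :=
  orthogonalProjection U ∘L (A ∘L U.subtypeL)

/-! The spectral hypotheses are turned into operator-norm bounds: with `c = (a + b) / 2` and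
`r = (b - a) / 2`, the shifted compression `S = P_U A|_U - c` has `‖S‖ ≤ r`, while
`R = P_W B|_W - c` satisfies `‖R w‖ ≥ (r + δ) ‖w‖`, because for self-adjoint operators the
spectral radius is the norm (applied to `S` and to `R⁻¹`). Writing `C = P_W P_U`, the operator in
the conclusion is the Sylvester residual `E = C S - R C`, so
`(r + δ) ‖C‖_F ≤ ‖R C‖_F = ‖C S - E‖_F ≤ r ‖C‖_F + ‖E‖_F`. -/

theorem ENNReal.Lp_add_le_tsum {ι : Type*} (f g : ι → ℝ≥0∞) {p : ℝ} (hp : 1 ≤ p) :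
    (∑' i, (f i + g i) ^ p) ^ (1 / p) ≤ (∑' i, f i ^ p) ^ (1 / p) + (∑' i, g i ^ p) ^ (1 / p) := by
  have hp0 : 0 < p := zero_lt_one.trans_le hp
  rw [one_div, ENNReal.rpow_inv_le_iff hp0, ENNReal.tsum_eq_iSup_sum]
  refine iSup_le fun s ↦ ?_
  rw [← ENNReal.rpow_inv_le_iff hp0, ← one_div]
  calc (∑ i ∈ s, (f i + g i) ^ p) ^ (1 / p)
      ≤ (∑ i ∈ s, f i ^ p) ^ (1 / p) + (∑ i ∈ s, g i ^ p) ^ (1 / p) := ENNReal.Lp_add_le s f g hp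
    _ ≤ _ := by gcongr <;> exact ENNReal.sum_le_tsum s

theorem HilbertBasis.enorm_sq_eq_tsum {ι E : Type*} [NormedAddCommGroup E] [InnerProductSpace ℝ E]
    (b : HilbertBasis ι ℝ E) (x : E) : ‖x‖ₑ ^ 2 = ∑' i, ‖⟪x, b i⟫‖ₑ ^ 2 := by
  have h : HasSum (fun i ↦ ⟪x, b i⟫ ^ 2) (‖x‖ ^ 2) := by
    simpa [real_inner_comm, sq, real_inner_self_eq_norm_sq] using b.hasSum_inner_mul_inner x x
  simp_rw [← ofReal_norm, ← ENNReal.ofReal_pow (norm_nonneg _), Real.norm_eq_abs, sq_abs]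
  rw [← h.tsum_eq, ENNReal.ofReal_tsum_of_nonneg (fun i ↦ sq_nonneg _) h.summable]

namespace ContinuousLinearMap
variable {V : Type*} [NormedAddCommGroup V] [InnerProductSpace ℝ V] [CompleteSpace V]

theorem norm_le_of_forall_mem_spectrum_abs_le {T : V →L[ℝ] V} (hT : IsSelfAdjoint T)
    {r : ℝ} (hr : 0 ≤ r) (h : ∀ t ∈ spectrum ℝ T, |t| ≤ r) : ‖T‖ ≤ r := by
  have : spectralRadius ℝ T ≤ ENNReal.ofReal r :=
    iSup₂_le fun t ht ↦ by
      rw [← enorm_eq_nnnorm, ← ofReal_norm]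
      exact ENNReal.ofReal_le_ofReal (h t ht)
  rwa [spectralRadius_eq_nnnorm T hT, ← enorm_eq_nnnorm, ← ofReal_norm,
    ENNReal.ofReal_le_ofReal_iff hr] at this

theorem spectrum_nonempty_of_isSelfAdjoint [Nontrivial V] {T : V →L[ℝ] V}
    (hT : IsSelfAdjoint T) : (spectrum ℝ T).Nonempty := by
  by_contra h
  rw [Set.not_nonempty_iff_eq_empty] at h
  have hT0 : T = 0 :=
    norm_le_zero_iff.1 (norm_le_of_forall_mem_spectrum_abs_le hT le_rfl (by simp [h]))
  simp [hT0, spectrum.zero_eq] at h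

theorem mul_norm_le_norm_apply_of_forall_mem_spectrum {T : V →L[ℝ] V} (hT : IsSelfAdjoint T)
    {s : ℝ} (hs : 0 < s) (h : ∀ t ∈ spectrum ℝ T, s ≤ |t|) (x : V) : s * ‖x‖ ≤ ‖T x‖ := by
  obtain ⟨u, rfl⟩ : IsUnit T :=
    (spectrum.zero_notMem_iff ℝ).1 fun h0 ↦ by simpa [hs.not_ge] using h 0 h0
  have hinv : IsSelfAdjoint (↑u⁻¹ : V →L[ℝ] V) := by
    rw [IsSelfAdjoint, ← Units.coe_star_inv, (Units.ext hT.star_eq : star u = u)]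
  have hnorm : ‖(↑u⁻¹ : V →L[ℝ] V)‖ ≤ s⁻¹ := by
    refine norm_le_of_forall_mem_spectrum_abs_le hinv (inv_nonneg.2 hs.le) fun t ht ↦ ?_
    rw [← spectrum.map_inv, Set.mem_inv] at ht
    have ht' := h _ ht
    rw [abs_inv] at ht'
    exact (le_inv_comm₀ hs (inv_pos.1 (hs.trans_le ht'))).1 ht'
  calc s * ‖x‖ = s * ‖(↑u⁻¹ : V →L[ℝ] V) ((u : V →L[ℝ] V) x)‖ := by
        simp [← mul_apply_eq_comp]
    _ ≤ s * (s⁻¹ * ‖(u : V →L[ℝ] V) x‖) := by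
        gcongr; exact (le_opNorm _ _).trans (mul_le_mul_of_nonneg_right hnorm (norm_nonneg _))
    _ = ‖(u : V →L[ℝ] V) x‖ := by field_simp

theorem norm_sub_algebraMap_le_of_spectrum_subset_Icc {T : V →L[ℝ] V} (hT : IsSelfAdjoint T)
    {a b : ℝ} (hab : a ≤ b) (h : spectrum ℝ T ⊆ Set.Icc a b) :
    ‖T - algebraMap ℝ (V →L[ℝ] V) ((a + b) / 2)‖ ≤ (b - a) / 2 := by
  refine norm_le_of_forall_mem_spectrum_abs_le (hT.sub (.algebraMap _ (.all _))) (by linarith)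
    fun t ht ↦ ?_
  obtain ⟨h₁, h₂⟩ := h (spectrum.add_mem_iff.2 (by rwa [neg_add_eq_sub]))
  rw [abs_le]
  constructor <;> linarith

theorem mul_norm_le_norm_sub_algebraMap_apply {T : V →L[ℝ] V} (hT : IsSelfAdjoint T)
    {a b δ : ℝ} (hab : a ≤ b) (hδ : 0 < δ) (h : spectrum ℝ T ⊆ Set.Iic (a - δ) ∪ Set.Ici (b + δ))
    (x : V) : ((b - a) / 2 + δ) * ‖x‖ ≤ ‖(T - algebraMap ℝ (V →L[ℝ] V) ((a + b) / 2)) x‖ := by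
  refine mul_norm_le_norm_apply_of_forall_mem_spectrum (hT.sub (.algebraMap _ (.all _)))
    (by linarith) (fun t ht ↦ ?_) x
  rcases h (spectrum.add_mem_iff.2 (by rwa [neg_add_eq_sub])) with h' | h'
  · rw [Set.mem_Iic] at h'; rw [abs_of_neg (by linarith)]; linarith
  · rw [Set.mem_Ici] at h'; rw [abs_of_pos (by linarith)]; linarith

end ContinuousLinearMap

section HilbertSchmidt
open ContinuousLinearMap

abbrev hsBasis : HilbertBasis (exists_hilbertBasis ℝ H).choose ℝ H :=
  (exists_hilbertBasis ℝ H).choose_spec.choose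

theorem hsNormSq_eq_tsum (X : H →L[ℝ] H) : hsNormSq X = ∑' i, ‖X (hsBasis i)‖ₑ ^ 2 := rfl

theorem hsNormSq_adjoint (X : H →L[ℝ] H) : hsNormSq (adjoint X) = hsNormSq X := by
  have h (i j) : ‖⟪adjoint X (hsBasis i), hsBasis j⟫‖ₑ = ‖⟪X (hsBasis j), hsBasis i⟫‖ₑ := by
    rw [adjoint_inner_left, real_inner_comm]
  rw [hsNormSq_eq_tsum, hsNormSq_eq_tsum]
  calc ∑' i, ‖adjoint X (hsBasis i)‖ₑ ^ 2
      = ∑' i, ∑' j, ‖⟪X (hsBasis j), hsBasis i⟫‖ₑ ^ 2 :=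
        tsum_congr fun i ↦ by simp only [hsBasis.enorm_sq_eq_tsum (adjoint X _), h]
    _ = ∑' j, ∑' i, ‖⟪X (hsBasis j), hsBasis i⟫‖ₑ ^ 2 := ENNReal.tsum_comm
    _ = ∑' j, ‖X (hsBasis j)‖ₑ ^ 2 := tsum_congr fun j ↦ (hsBasis.enorm_sq_eq_tsum _).symm

-- `hsNorm` is `0` when `hsNormSq = ⊤`; the `ℝ≥0∞`-valued norm needs no finiteness side conditions.
def hsENorm (X : H →L[ℝ] H) : ℝ≥0∞ := hsNormSq X ^ (1 / 2 : ℝ)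

@[simp]
theorem hsNorm_zero : hsNorm (0 : H →L[ℝ] H) = 0 := by
  simp [hsNorm, hsNormSq]

theorem hsENorm_sq (X : H →L[ℝ] H) : hsENorm X ^ 2 = hsNormSq X := by
  rw [hsENorm, ← ENNReal.rpow_natCast, ← ENNReal.rpow_mul]; norm_num

theorem hsNorm_eq_toReal_hsENorm (X : H →L[ℝ] H) : hsNorm X = (hsENorm X).toReal := by
  rw [hsNorm, hsENorm, ← ENNReal.toReal_rpow, Real.sqrt_eq_rpow]

theorem hsENorm_adjoint (X : H →L[ℝ] H) : hsENorm (adjoint X) = hsENorm X := by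
  rw [hsENorm, hsENorm, hsNormSq_adjoint]

theorem ofReal_mul_hsENorm_le {X Y : H →L[ℝ] H} {c d : ℝ}
    (h : ∀ x, c * ‖X x‖ ≤ d * ‖Y x‖) :
    ENNReal.ofReal c * hsENorm X ≤ ENNReal.ofReal d * hsENorm Y := by
  rw [← ENNReal.pow_le_pow_left_iff two_ne_zero, mul_pow, mul_pow,
    hsENorm_sq, hsENorm_sq, hsNormSq_eq_tsum, hsNormSq_eq_tsum, ← ENNReal.tsum_mul_left,
    ← ENNReal.tsum_mul_left]
  refine ENNReal.tsum_le_tsum fun i ↦ ?_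
  rw [← mul_pow, ← mul_pow]
  gcongr ?_ ^ 2
  rw [← ofReal_norm, ← ofReal_norm, ← ENNReal.ofReal_mul' (norm_nonneg _),
    ← ENNReal.ofReal_mul' (norm_nonneg _)]
  exact ENNReal.ofReal_le_ofReal (h _)

theorem hsENorm_comp_le (Z X : H →L[ℝ] H) : hsENorm (Z ∘L X) ≤ ‖Z‖ₑ * hsENorm X := by
  simpa [ofReal_norm] using ofReal_mul_hsENorm_le (X := Z ∘L X) (Y := X) (c := 1) (d := ‖Z‖)
    fun x ↦ by simpa using Z.le_opNorm (X x)

theorem hsENorm_comp_le_right (X Z : H →L[ℝ] H) : hsENorm (X ∘L Z) ≤ ‖Z‖ₑ * hsENorm X := by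
  rw [← hsENorm_adjoint, adjoint_comp, ← hsENorm_adjoint X, ← adjoint.enorm_map Z]
  exact hsENorm_comp_le _ _

theorem hsENorm_sub_le (X Y : H →L[ℝ] H) : hsENorm (X - Y) ≤ hsENorm X + hsENorm Y := by
  simp_rw [hsENorm, hsNormSq_eq_tsum, ← ENNReal.rpow_two]
  calc (∑' i, ‖(X - Y) (hsBasis i)‖ₑ ^ (2 : ℝ)) ^ (1 / 2 : ℝ)
      ≤ (∑' i, (‖X (hsBasis i)‖ₑ + ‖Y (hsBasis i)‖ₑ) ^ (2 : ℝ)) ^ (1 / 2 : ℝ) := by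
        gcongr with i; exact enorm_sub_le
    _ ≤ _ := ENNReal.Lp_add_le_tsum _ _ one_le_two

theorem sub_mul_hsNorm_le_hsNorm_comp_sub_comp {C S R : H →L[ℝ] H} {r s : ℝ}
    (hC : hsNormSq C ≠ ⊤) (hs : 0 ≤ s) (hS : ‖S‖ ≤ r) (hR : ∀ x, s * ‖C x‖ ≤ ‖R (C x)‖) :
    (s - r) * hsNorm C ≤ hsNorm (C ∘L S - R ∘L C) := by
  have hr : 0 ≤ r := (norm_nonneg S).trans hS
  have hCfin : hsENorm C ≠ ⊤ := ENNReal.rpow_ne_top_of_nonneg (by norm_num) hC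
  have hCS : hsENorm (C ∘L S) ≤ ENNReal.ofReal r * hsENorm C := by
    refine (hsENorm_comp_le_right C S).trans ?_
    rw [← ofReal_norm]
    gcongr
  have hRC : ENNReal.ofReal s * hsENorm C ≤ hsENorm (R ∘L C) := by
    simpa using ofReal_mul_hsENorm_le (X := C) (Y := R ∘L C) (d := 1) (by simpa using hR)
  have hEfin : hsENorm (C ∘L S - R ∘L C) ≠ ⊤ := by
    refine ne_top_of_le_ne_top ?_
      ((hsENorm_sub_le _ _).trans (add_le_add hCS (hsENorm_comp_le R C)))
    finiteness
  have key : ENNReal.ofReal s * hsENorm C ≤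
      ENNReal.ofReal r * hsENorm C + hsENorm (C ∘L S - R ∘L C) :=
    calc ENNReal.ofReal s * hsENorm C ≤ hsENorm (C ∘L S - (C ∘L S - R ∘L C)) := by
          rwa [sub_sub_cancel]
      _ ≤ _ := (hsENorm_sub_le _ _).trans (add_le_add_left hCS _)
  have := ENNReal.toReal_mono (by finiteness) key
  rw [ENNReal.toReal_add (by finiteness) hEfin, ENNReal.toReal_mul, ENNReal.toReal_mul,
    ENNReal.toReal_ofReal hs, ENNReal.toReal_ofReal hr] at this
  rw [hsNorm_eq_toReal_hsENorm, hsNorm_eq_toReal_hsENorm]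
  linarith

end HilbertSchmidt

theorem Submodule.norm_subtypeL_comp_comp_orthogonalProjection_le {H : Type*}
    [NormedAddCommGroup H] [InnerProductSpace ℝ H] (U : Submodule ℝ H) [CompleteSpace U]
    (T : U →L[ℝ] U) : ‖U.subtypeL ∘L T ∘L orthogonalProjectionOnto U‖ ≤ ‖T‖ :=
  calc ‖U.subtypeL ∘L T ∘L orthogonalProjectionOnto U‖
      ≤ ‖U.subtypeL‖ * (‖T‖ * ‖(orthogonalProjectionOnto U : H →L[ℝ] U)‖) :=
        (ContinuousLinearMap.opNorm_comp_le _ _).trans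
          (by gcongr; exact ContinuousLinearMap.opNorm_comp_le _ _)
    _ ≤ 1 * (‖T‖ * 1) := by
        gcongr
        exacts [U.norm_subtypeL_le, orthogonalProjectionOnto_norm_le U]
    _ = ‖T‖ := by ring

theorem proj_eq {H : Type*} [NormedAddCommGroup H] [InnerProductSpace ℝ H]
    (U : Submodule ℝ H) [CompleteSpace U] :
    proj U = U.subtypeL ∘L orthogonalProjectionOnto U := by
  rw [proj, dif_pos (inferInstance : HasOrthogonalProjection U)]

theorem isSelfAdjoint_compressOp (U : Submodule ℝ H) [CompleteSpace U] {A : H →L[ℝ] H}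
    (hA : IsSelfAdjoint A) : IsSelfAdjoint (compressOp U A) := by
  simpa [compressOp, U.adjoint_subtypeL] using hA.adjoint_conj U.subtypeL

theorem proj_eq_zero {H : Type*} [NormedAddCommGroup H] [InnerProductSpace ℝ H]
    (U : Submodule ℝ H) [Subsingleton U] : proj U = 0 := by
  ext x
  simp [proj_eq U, Subsingleton.elim (orthogonalProjectionOnto U x) 0]

/-- (Davis–Kahan.)  If the spectrum of `P_U A|_U` lies in `[a, b]`, the
spectrum of `P_W B|_W` lies in `(−∞, a−δ] ∪ [b+δ, ∞)`, and `P_W P_U` is Hilbert–Schmidt,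
then `δ ‖P_W P_U‖_F ≤ ‖P_W P_U A P_U − P_W B P_W P_U‖_F`. -/
theorem stmt13 {H : Type*} [NormedAddCommGroup H] [InnerProductSpace ℝ H] [CompleteSpace H]
    (A B : H →L[ℝ] H)
    (hAsa : ∀ x y : H, ⟪A x, y⟫ = ⟪x, A y⟫)
    (hBsa : ∀ x y : H, ⟪B x, y⟫ = ⟪x, B y⟫)
    (U W : Submodule ℝ H) [CompleteSpace U] [CompleteSpace W]
    (hHS : hsNormSq ((proj W) ∘L (proj U)) ≠ ⊤)
    (a b δ : ℝ) (hδ : 0 < δ)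
    (hspecA : spectrum ℝ (compressOp U A) ⊆ Set.Icc a b)
    (hspecB : spectrum ℝ (compressOp W B) ⊆ Set.Iic (a - δ) ∪ Set.Ici (b + δ)) :
    δ * hsNorm ((proj W) ∘L (proj U)) ≤
      hsNorm ((proj W) ∘L (proj U) ∘L A ∘L (proj U) - (proj W) ∘L B ∘L (proj W) ∘L (proj U)) := by
  have hA := isSelfAdjoint_compressOp U <|
    ContinuousLinearMap.isSelfAdjoint_iff_isSymmetric.2 hAsa
  have hB := isSelfAdjoint_compressOp W <|
    ContinuousLinearMap.isSelfAdjoint_iff_isSymmetric.2 hBsa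
  rcases subsingleton_or_nontrivial U with hU | hU
  · simp [proj_eq_zero U]
  obtain ⟨t, ht⟩ := ContinuousLinearMap.spectrum_nonempty_of_isSelfAdjoint hA
  have hab : a ≤ b := (hspecA ht).1.trans (hspecA ht).2
  set c := (a + b) / 2
  set S := U.subtypeL ∘L (compressOp U A - algebraMap ℝ _ c) ∘L orthogonalProjectionOnto U
  set R := W.subtypeL ∘L (compressOp W B - algebraMap ℝ _ c) ∘L orthogonalProjectionOnto W
  have hS : ‖S‖ ≤ (b - a) / 2 := (U.norm_subtypeL_comp_comp_orthogonalProjection_le _).trans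
    (ContinuousLinearMap.norm_sub_algebraMap_le_of_spectrum_subset_Icc hA hab hspecA)
  have hR (x : H) : ((b - a) / 2 + δ) * ‖(proj W ∘L proj U) x‖ ≤ ‖R ((proj W ∘L proj U) x)‖ := by
    obtain ⟨w, hw⟩ : ∃ w : W, (proj W ∘L proj U) x = w :=
      ⟨orthogonalProjectionOnto W (proj U x), by simp [proj_eq W]⟩
    simpa [R, hw] using
      ContinuousLinearMap.mul_norm_le_norm_sub_algebraMap_apply hB hab hδ hspecB w
  have hE : (proj W ∘L proj U) ∘L S - R ∘L (proj W ∘L proj U) =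
      (proj W) ∘L (proj U) ∘L A ∘L (proj U) - (proj W) ∘L B ∘L (proj W) ∘L (proj U) := by
    ext x
    simp [S, R, proj_eq, compressOp,
      starProjection_eq_self_iff.2 (starProjection_apply_mem _ _)]
  have := sub_mul_hsNorm_le_hsNorm_comp_sub_comp hHS (by linarith) hS hR
  rw [hE] at this
  linarith
end
end
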